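/- Let x̃ ∈ ℝⁿ with Σᵢ x̃ᵢ = 1 and suppose R x̃ = φ·1 for a scalar φ ≠ 0 (so x̃ = φ·R⁻¹1 for invertible R). Define x̃(μ) = (1/(1−μ))·(x̃ − (μ/n)·1) for μ ∈ [0,1). Then Σᵢ x̃(μ)ᵢ = 1 and R̂(μ)·x̃(μ) is a constant vector, where R̂(μ) = R + (μ/((1-μ)n))·RJ; i.e., x̃(μ) is the interior fixed-point candidate of the incompetent game. -/

import Mathlib

/-!
Since `x̃(μ)` still sums to one, `J x̃(μ) = 1`, so `R̂(μ) x̃(μ) = R x̃(μ) + (μ / ((1 - μ) n)) R 1`.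
On the other hand `R x̃(μ) = (φ 1 - (μ / n) R 1) / (1 - μ)`, and the two multiples of `R 1` cancel,
leaving `R̂(μ) x̃(μ) = (φ / (1 - μ)) 1`.
-/

open Matrix BigOperators

section

variable {ι K : Type*} [Fintype ι] [Field K]

theorem of_one_mulVec (x : ι → K) : (of fun _ _ => 1 : Matrix ι ι K) *ᵥ x = (∑ i, x i) • 1 := by
  ext i
  simp [mulVec, dotProduct]

theorem add_smul_mul_of_one_mulVec (R : Matrix ι ι K) (t : K) (x : ι → K) :
    (R + t • (R * of fun _ _ => 1)) *ᵥ x = R *ᵥ x + (t * ∑ i, x i) • R *ᵥ 1 := by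
  rw [add_mulVec, smul_mulVec, ← mulVec_mulVec, of_one_mulVec, mulVec_smul, smul_smul]

theorem sum_shift_rescale_eq_one {x : ι → K} (hx : ∑ i, x i = 1)
    (hcard : (Fintype.card ι : K) ≠ 0) {μ : K} (hμ : μ ≠ 1) :
    ∑ i, (1 / (1 - μ)) * (x i - μ / Fintype.card ι) = 1 := by
  have h1μ : 1 - μ ≠ 0 := sub_ne_zero.mpr hμ.symm
  rw [← Finset.mul_sum, Finset.sum_sub_distrib, hx, Finset.sum_const, Finset.card_univ,
    nsmul_eq_mul]
  field_simp

theorem mulVec_shift_rescale (R : Matrix ι ι K) (x : ι → K) (s c : K) :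
    R *ᵥ (fun i => s * (x i - c)) = s • (R *ᵥ x - c • R *ᵥ 1) := by
  have hvec : (fun i => s * (x i - c)) = s • (x - c • 1) := by
    ext i
    simp
  rw [hvec, mulVec_smul, mulVec_sub, mulVec_smul]

theorem add_smul_mul_of_one_mulVec_shift_rescale {R : Matrix ι ι K} {x : ι → K} {φ μ : K}
    (hx : ∑ i, x i = 1) (hfix : R *ᵥ x = fun _ => φ)
    (hcard : (Fintype.card ι : K) ≠ 0) (hμ : μ ≠ 1) :
    (R + (μ / ((1 - μ) * Fintype.card ι)) • (R * of fun _ _ => 1)) *ᵥ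
        (fun i => (1 / (1 - μ)) * (x i - μ / Fintype.card ι)) = fun _ => φ / (1 - μ) := by
  have h1μ : 1 - μ ≠ 0 := sub_ne_zero.mpr hμ.symm
  rw [add_smul_mul_of_one_mulVec, sum_shift_rescale_eq_one hx hcard hμ, mulVec_shift_rescale,
    hfix]
  ext i
  simp only [Pi.add_apply, Pi.smul_apply, Pi.sub_apply, smul_eq_mul]
  field_simp
  ring

end

theorem incompetent_fixed_point_candidate_general (n : ℕ) (hn : 0 < n)
    (R J : Matrix (Fin n) (Fin n) ℝ) (hJ : J = Matrix.of fun _ _ => (1 : ℝ))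
    (xt : Fin n → ℝ) (hsum : ∑ i, xt i = 1)
    (φ : ℝ) (hfix : R.mulVec xt = fun _ => φ)
    (μ : ℝ) (hμ : μ ∈ Set.Ico (0 : ℝ) 1) :
    (∑ i, (1 / (1 - μ)) * (xt i - μ / n) = 1) ∧
    ∃ c : ℝ, (R + (μ / ((1 - μ) * n)) • (R * J)).mulVec
        (fun i => (1 / (1 - μ)) * (xt i - μ / n)) = fun _ => c := by
  have hcard : (Fintype.card (Fin n) : ℝ) ≠ 0 := by simpa using hn.ne'
  have hμ1 : μ ≠ 1 := hμ.2.ne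
  subst hJ
  refine ⟨?_, φ / (1 - μ), ?_⟩
  · simpa only [Fintype.card_fin] using sum_shift_rescale_eq_one hsum hcard hμ1
  · simpa only [Fintype.card_fin] using
      add_smul_mul_of_one_mulVec_shift_rescale hsum hfix hcard hμ1

/-- If `x̃` sums to one and `R x̃ = φ·1` with `φ ≠ 0` and `R` invertible, then
`x̃(μ) = (1/(1−μ))(x̃ − (μ/n)·1)` sums to one and `R̂(μ) x̃(μ)` is a constant vector,
where `R̂(μ) = R + (μ/((1-μ)n)) RJ`; i.e. `x̃(μ)` is the interior fixed-point candidate. -/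
theorem incompetent_fixed_point_candidate (n : ℕ) (hn : 0 < n)
    (R J : Matrix (Fin n) (Fin n) ℝ) (hJ : J = Matrix.of fun _ _ => (1 : ℝ))
    (hR : IsUnit R)
    (xt : Fin n → ℝ) (hsum : ∑ i, xt i = 1)
    (φ : ℝ) (hφ : φ ≠ 0) (hfix : R.mulVec xt = fun _ => φ)
    (μ : ℝ) (hμ : μ ∈ Set.Ico (0 : ℝ) 1) :
    (∑ i, (1 / (1 - μ)) * (xt i - μ / n) = 1) ∧
    ∃ c : ℝ, (R + (μ / ((1 - μ) * n)) • (R * J)).mulVec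
        (fun i => (1 / (1 - μ)) * (xt i - μ / n)) = fun _ => c :=
  incompetent_fixed_point_candidate_general n hn R J hJ xt hsum φ hfix μ hμ
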